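/- Let $F$ be a field of $\operatorname{char}(F) = 2$, $n \geq 2$, and let $\alpha_1,\dots,\alpha_{n+1} \in F^\times$ be such that the bilinear $(n+1)$-fold Pfister form $\langle\!\langle \alpha_1,\dots,\alpha_{n+1}\rangle\!\rangle$ is anisotropic. Then the anisotropic bilinear $n$-fold Pfister forms $\varphi = \langle\!\langle \alpha_1,\dots,\alpha_{n-2},\alpha_{n-1},\alpha_n\rangle\!\rangle$ and $\psi = \langle\!\langle \alpha_1,\dots,\alpha_{n-2},\alpha_{n-1}+1,\alpha_{n+1}\rangle\!\rangle$ do not share a common $(n-1)$-fold Pfister factor; that is, there are no $c_1,\dots,c_{n-1}, d, e \in F^\times$ such that $\varphi \cong \langle\!\langle c_1,\dots,c_{n-1}, d\rangle\!\rangle$ and $\psi \cong \langle\!\langle c_1,\dots,c_{n-1}, e\rangle\!\rangle$. -/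

import Mathlib

/-- The quadratic form `v ↦ ∑ i j, M i j * v i * v j` on `ι → F` given by a matrix `M`. -/
noncomputable def quadOfMatrix (F : Type) [Field F] {ι : Type} [Fintype ι] [DecidableEq ι]
    (M : Matrix ι ι F) : QuadraticForm F (ι → F) :=
  LinearMap.BilinMap.toQuadraticMap (Matrix.toLinearMap₂' F M)

/-- The (diagonal) Gram matrix of the bilinear `m`-fold Pfister form `⟨⟨a₁,…,aₘ⟩⟩`
(characteristic `2`), indexed by `e : Fin m → Bool`, with diagonal entries the
monomials `∏ aᵢ^{eᵢ}`. -/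
noncomputable def pfisterMatrix (F : Type) [Field F] {m : ℕ} (a : Fin m → F) :
    Matrix (Fin m → Bool) (Fin m → Bool) F :=
  Matrix.diagonal fun e => ∏ i, if e i then a i else 1

/-- Matrix of the binary quadratic form `[a,b] : (x,y) ↦ a x² + x y + b y²`. -/
def binaryMatrix (F : Type) [Field F] (a b : F) : Matrix Bool Bool F :=
  fun i j =>
    match i, j with
    | false, false => a
    | false, true => 1
    | true, false => 0
    | true, true => b

/-- Matrix of the quadratic `(m+1)`-fold Pfister form `⟨⟨a₁,…,aₘ, b]] = ⟨⟨a₁,…,aₘ⟩⟩ ⊗ [1,b]`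
in characteristic `2`. -/
noncomputable def quadPfisterMatrix (F : Type) [Field F] {m : ℕ} (a : Fin m → F) (b : F) :
    Matrix ((Fin m → Bool) × Bool) ((Fin m → Bool) × Bool) F :=
  Matrix.kroneckerMap (· * ·) (pfisterMatrix F a) (binaryMatrix F 1 b)

/-- The quadratic `(m+1)`-fold Pfister form `⟨⟨a₁,…,aₘ, b]]` in characteristic `2`. -/
noncomputable def quadPfister (F : Type) [Field F] {m : ℕ} (a : Fin m → F) (b : F) :
    QuadraticForm F (((Fin m → Bool) × Bool) → F) :=
  quadOfMatrix F (quadPfisterMatrix F a b)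

/-- Matrix of the hyperbolic quadratic form of rank `k`:
`v ↦ ∑ i, v (i, false) * v (i, true)`. -/
def hypMatrix (F : Type) [Field F] (k : ℕ) : Matrix (Fin k × Bool) (Fin k × Bool) F :=
  fun x y => if x.1 = y.1 ∧ x.2 = false ∧ y.2 = true then 1 else 0

/-- Witt equivalence of quadratic forms: the two forms become isometric after adding
suitable hyperbolic forms. -/
def WittEquivalent (F : Type) [Field F] {V₁ V₂ : Type} [AddCommGroup V₁] [Module F V₁]
    [AddCommGroup V₂] [Module F V₂] (q₁ : QuadraticForm F V₁) (q₂ : QuadraticForm F V₂) :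
    Prop :=
  ∃ k l : ℕ, QuadraticMap.Equivalent
    (q₁.prod (quadOfMatrix F (hypMatrix F k))) (q₂.prod (quadOfMatrix F (hypMatrix F l)))

/-- The symmetric bilinear form given by the matrix `M` is anisotropic:
`vᵀ M v ≠ 0` for all `v ≠ 0`. -/
def Matrix.BilinAnisotropic {F : Type} [Field F] {ι : Type} [Fintype ι]
    (M : Matrix ι ι F) : Prop :=
  ∀ v : ι → F, v ≠ 0 → dotProduct v (M.mulVec v) ≠ 0

/-- The bilinear forms given by the matrices `M` and `N` are isometric:
`N = Pᵀ M P` for some invertible matrix `P`. -/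
def Matrix.BilinIsometric {F : Type} [Field F] {ι : Type} [Fintype ι] [DecidableEq ι]
    (M N : Matrix ι ι F) : Prop :=
  ∃ P : Matrix ι ι F, IsUnit P.det ∧ N = P.transpose * M * P

/-!
In characteristic `2` the value `vᵀ D v = ∑ aᵢ vᵢ²` of a diagonal form `D = ⟨a₁, …, a_k⟩` is an
`F²`-linear combination of the `aᵢ`: the values of `D` form the `F²`-span of its entries, and `D`
is anisotropic exactly when these are `F²`-linearly independent. Moreover `v ↦ vᵀ D v` is
additive, hence injective when `D` is anisotropic.

Write `α = (a, x, z, y)`, so that `φ = ⟨⟨a, x, z⟩⟩` and `ψ = ⟨⟨a, x + 1, y⟩⟩`. Both are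
anisotropic because their quadratic maps are pulled back from that of `⟨⟨a, x, z, y⟩⟩` (for `ψ`
through `(v₀ + v₁)² + x v₁² = v₀² + (x + 1) v₁²`). If `φ ≅ ⟨⟨c, d⟩⟩` and `ψ ≅ ⟨⟨c, e⟩⟩`, the values
of `⟨⟨c⟩⟩` are values of both `⟨⟨a, x, z⟩⟩` and `⟨⟨a, x, y⟩⟩`. As the monomials of `⟨⟨a, x, z, y⟩⟩`
are `F²`-independent, these two value spaces meet in that of `⟨⟨a, x⟩⟩`, which has the same
dimension as that of `⟨⟨c⟩⟩`; hence `x + 1`, a value of `⟨⟨a, x⟩⟩`, is a value `tᵀ⟨⟨c⟩⟩t`.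
Injectivity of the quadratic maps forces both isometries to fix the vector `1` and to carry `t`
to `1 + e` in `φ` and to `e` in `ψ`, where `e` is the basis vector at which the diagonal entries
are `x` and `x + 1`; pairing with `1` yields `t(1) = 1` and `t(1) = 0`.
-/

open Matrix Module Submodule Set Function

section QuadraticValues

variable {R : Type} [CommRing R] {ι : Type} [Fintype ι]

theorem Matrix.dotProduct_transpose_mul_mul_mulVec (M P : Matrix ι ι R) (u v : ι → R) :
    u ⬝ᵥ (Pᵀ * M * P) *ᵥ v = (P *ᵥ u) ⬝ᵥ M *ᵥ (P *ᵥ v) := by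
  rw [← mulVec_mulVec, ← mulVec_mulVec, dotProduct_mulVec, dotProduct_mulVec (P *ᵥ u),
    vecMul_transpose, ← dotProduct_mulVec]

theorem Matrix.IsSymm.add_dotProduct_mulVec_add [CharP R 2] {M : Matrix ι ι R} (hM : M.IsSymm)
    (u v : ι → R) :
    (u + v) ⬝ᵥ M *ᵥ (u + v) = u ⬝ᵥ M *ᵥ u + v ⬝ᵥ M *ᵥ v := by
  have hsymm : v ⬝ᵥ M *ᵥ u = u ⬝ᵥ M *ᵥ v := by
    rw [dotProduct_mulVec v, ← mulVec_transpose, hM.eq, dotProduct_comm]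
  simp only [mulVec_add, dotProduct_add, add_dotProduct, hsymm]
  linear_combination (u ⬝ᵥ M *ᵥ v) * CharTwo.two_eq_zero (R := R)

end QuadraticValues

theorem LinearIndependent.span_image_inf_le {ι R M : Type*} [Ring R] [AddCommGroup M] [Module R M]
    {v : ι → M} (hv : LinearIndependent R v) (s t : Set ι) :
    span R (v '' s) ⊓ span R (v '' t) ≤ span R (v '' (s ∩ t)) := by
  rintro x ⟨hs, ht⟩
  rw [SetLike.mem_coe, Finsupp.mem_span_image_iff_linearCombination] at hs ht
  rw [Finsupp.mem_span_image_iff_linearCombination]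
  obtain ⟨l, hl, rfl⟩ := hs
  obtain ⟨l', hl', hll'⟩ := ht
  obtain rfl : l' = l := hv hll'
  exact ⟨l', by rw [Finsupp.supported_inter]; exact ⟨hl, hl'⟩, rfl⟩

section Anisotropic

variable {F : Type} [Field F] {ι κ : Type} [Fintype ι] [Fintype κ]

theorem Matrix.BilinAnisotropic.quad_injective [CharP F 2] {M : Matrix ι ι F}
    (hM : M.BilinAnisotropic) (hs : M.IsSymm) : Injective fun v => v ⬝ᵥ M *ᵥ v := by
  intro u v huv
  by_contra hne
  refine hM (u + v) (fun h => hne (funext fun i => CharTwo.add_eq_zero.mp (congrFun h i))) ?_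
  rw [hs.add_dotProduct_mulVec_add, show u ⬝ᵥ M *ᵥ u = v ⬝ᵥ M *ᵥ v from huv,
    CharTwo.add_self_eq_zero]

theorem Matrix.BilinAnisotropic.dotProduct_mulVec_eq_of_congr [CharP F 2]
    {M N P : Matrix ι ι F} (hM : M.BilinAnisotropic) (hs : M.IsSymm) (hN : N = Pᵀ * M * P)
    {u₁ v₁ u₂ v₂ : ι → F} (hu : u₁ ⬝ᵥ M *ᵥ u₁ = u₂ ⬝ᵥ N *ᵥ u₂)
    (hv : v₁ ⬝ᵥ M *ᵥ v₁ = v₂ ⬝ᵥ N *ᵥ v₂) :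
    u₁ ⬝ᵥ M *ᵥ v₁ = u₂ ⬝ᵥ N *ᵥ v₂ := by
  subst hN
  rw [dotProduct_transpose_mul_mul_mulVec] at hu hv ⊢
  rw [hM.quad_injective hs hu, hM.quad_injective hs hv]

/-- `T` need not be linear: vanishing only at `0` is all that the transfer of anisotropy uses. -/
def Matrix.QuadSubform (M : Matrix ι ι F) (N : Matrix κ κ F) : Prop :=
  ∃ T : (ι → F) → κ → F, (∀ v, T v = 0 → v = 0) ∧ ∀ v, v ⬝ᵥ M *ᵥ v = T v ⬝ᵥ N *ᵥ T v

theorem Matrix.QuadSubform.trans {ν : Type} [Fintype ν] {M : Matrix ι ι F} {N : Matrix κ κ F}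
    {L : Matrix ν ν F} (hMN : M.QuadSubform N) (hNL : N.QuadSubform L) : M.QuadSubform L := by
  obtain ⟨T, hT, hMT⟩ := hMN
  obtain ⟨S, hS, hNS⟩ := hNL
  exact ⟨S ∘ T, fun v h => hT v (hS _ h), fun v => (hMT v).trans (hNS (T v))⟩

theorem Matrix.QuadSubform.bilinAnisotropic {M : Matrix ι ι F} {N : Matrix κ κ F}
    (h : M.QuadSubform N) (hN : N.BilinAnisotropic) : M.BilinAnisotropic := by
  obtain ⟨T, hT, hMT⟩ := h
  intro v hv
  rw [hMT]
  exact hN _ (mt (hT v) hv)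

theorem Matrix.BilinIsometric.quadSubform [DecidableEq ι] {M N : Matrix ι ι F}
    (h : M.BilinIsometric N) : N.QuadSubform M := by
  obtain ⟨P, hP, rfl⟩ := h
  have hinj : Injective (P *ᵥ ·) :=
    mulVec_injective_iff_isUnit.mpr ((isUnit_iff_isUnit_det P).mpr hP)
  exact ⟨(P *ᵥ ·), fun v hv => hinj (hv.trans (mulVec_zero P).symm),
    fun v => dotProduct_transpose_mul_mul_mulVec M P v v⟩

end Anisotropic

section Squares

variable {F : Type} [Field F] [CharP F 2]

variable (F) in
def squares : Subfield F := (frobenius F 2).fieldRange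

theorem mem_squares {x : F} : x ∈ squares F ↔ ∃ y, y ^ 2 = x := by
  simp [squares, frobenius_def]

variable {ι κ : Type} [Fintype ι] [DecidableEq ι]

theorem Matrix.dotProduct_diagonal_mulVec_self (a v : ι → F) :
    v ⬝ᵥ diagonal a *ᵥ v = ∑ i, (⟨v i ^ 2, mem_squares.mpr ⟨v i, rfl⟩⟩ : squares F) • a i := by
  simp only [dotProduct, mulVec_diagonal, Subfield.smul_def]
  exact Finset.sum_congr rfl fun i _ => by ring

theorem mem_span_range_iff_exists_dotProduct_diagonal (a : ι → F) (x : F) :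
    x ∈ span (squares F) (range a) ↔ ∃ v, v ⬝ᵥ diagonal a *ᵥ v = x := by
  rw [mem_span_range_iff_exists_fun]
  constructor
  · rintro ⟨k, rfl⟩
    choose v hv using fun i => mem_squares.mp (k i).2
    refine ⟨v, ?_⟩
    rw [dotProduct_diagonal_mulVec_self]
    congr! with i
    exact hv i
  · rintro ⟨v, rfl⟩
    exact ⟨_, (dotProduct_diagonal_mulVec_self a v).symm⟩

theorem Matrix.BilinAnisotropic.linearIndependent_squares {a : ι → F}
    (h : (diagonal a).BilinAnisotropic) : LinearIndependent (squares F) a := by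
  rw [Fintype.linearIndependent_iff]
  intro k hk
  choose v hv using fun i => mem_squares.mp (k i).2
  have hv0 : v = 0 := by
    by_contra hne
    refine h v hne ?_
    rw [dotProduct_diagonal_mulVec_self, ← hk]
    congr! with i
    exact hv i
  intro i
  ext
  simp [← hv i, hv0]

theorem Matrix.QuadSubform.span_range_le {a : ι → F} {b : κ → F} [Fintype κ] [DecidableEq κ]
    (h : (diagonal a).QuadSubform (diagonal b)) :
    span (squares F) (range a) ≤ span (squares F) (range b) := by
  obtain ⟨T, -, hT⟩ := h
  rw [span_le]
  rintro _ ⟨i, rfl⟩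
  rw [SetLike.mem_coe, mem_span_range_iff_exists_dotProduct_diagonal]
  exact ⟨T (Pi.single i 1), by simp [← hT]⟩

end Squares

section Glue

variable {α : Type*} {n : ℕ}

def snocGlue (u₀ u₁ : (Fin n → Bool) → α) (e : Fin (n + 1) → Bool) : α :=
  if e (Fin.last n) then u₁ (Fin.init e) else u₀ (Fin.init e)

@[simp]
theorem snocGlue_snoc_false (u₀ u₁ : (Fin n → Bool) → α) (e : Fin n → Bool) :
    snocGlue u₀ u₁ (Fin.snoc e false) = u₀ e := by
  simp [snocGlue]

@[simp]
theorem snocGlue_snoc_true (u₀ u₁ : (Fin n → Bool) → α) (e : Fin n → Bool) :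
    snocGlue u₀ u₁ (Fin.snoc e true) = u₁ e := by
  simp [snocGlue]

theorem snocGlue_snoc_self (v : (Fin (n + 1) → Bool) → α) :
    snocGlue (fun e => v (Fin.snoc e false)) (fun e => v (Fin.snoc e true)) = v := by
  funext e
  induction e using Fin.snocCases with
  | snoc e s => cases s <;> simp

theorem snocGlue_eq_zero [Zero α] {u₀ u₁ : (Fin n → Bool) → α} :
    snocGlue u₀ u₁ = 0 ↔ u₀ = 0 ∧ u₁ = 0 := by
  refine ⟨fun h => ⟨funext fun e => ?_, funext fun e => ?_⟩, fun ⟨h₀, h₁⟩ => ?_⟩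
  · simpa using congrFun h (Fin.snoc e false)
  · simpa using congrFun h (Fin.snoc e true)
  · funext e
    simp [snocGlue, h₀, h₁]

end Glue

section Pfister

variable {F : Type} [Field F] {n : ℕ}

def pfisterCoeff (a : Fin n → F) (e : Fin n → Bool) : F := ∏ i, if e i then a i else 1

theorem pfisterMatrix_eq_diagonal (a : Fin n → F) :
    pfisterMatrix F a = diagonal (pfisterCoeff a) := rfl

@[simp]
theorem pfisterCoeff_false (a : Fin n → F) : pfisterCoeff a (fun _ => false) = 1 := by
  simp [pfisterCoeff]

@[simp]
theorem pfisterCoeff_snoc (a : Fin n → F) (b : F) (e : Fin n → Bool) (s : Bool) :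
    pfisterCoeff (Fin.snoc a b) (Fin.snoc e s) = pfisterCoeff a e * if s then b else 1 := by
  simp [pfisterCoeff, Fin.prod_univ_castSucc]

theorem add_one_mem_span_pfisterCoeff_snoc {K : Type} [Field K] [Module K F] (a : Fin n → F)
    (x : F) : x + 1 ∈ span K (range (pfisterCoeff (Fin.snoc a x))) := by
  refine add_mem (subset_span ⟨Fin.snoc (fun _ => false) true, by simp⟩)
    (subset_span ⟨Fin.snoc (fun _ => false) false, by simp⟩)

theorem pfisterMatrix_snoc_quad (a : Fin n → F) (b : F) (v : (Fin (n + 1) → Bool) → F) :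
    v ⬝ᵥ pfisterMatrix F (Fin.snoc a b) *ᵥ v =
      (fun e => v (Fin.snoc e false)) ⬝ᵥ pfisterMatrix F a *ᵥ (fun e => v (Fin.snoc e false)) +
        b * (fun e => v (Fin.snoc e true)) ⬝ᵥ pfisterMatrix F a *ᵥ
          (fun e => v (Fin.snoc e true)) := by
  simp only [pfisterMatrix_eq_diagonal, dotProduct, mulVec_diagonal]
  rw [← (Fin.snocEquiv fun _ => Bool).sum_comp, Fintype.sum_prod_type, Fintype.sum_bool,
    Finset.mul_sum, add_comm]
  congr 1 <;> refine Finset.sum_congr rfl fun e _ => ?_ <;>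
    simp [Fin.snocEquiv, mul_comm, mul_left_comm, mul_assoc]

theorem pfisterMatrix_isSymm (a : Fin n → F) : (pfisterMatrix F a).IsSymm :=
  isSymm_diagonal _

theorem quadSubform_pfisterMatrix_snoc (a : Fin n → F) (b : F) :
    (pfisterMatrix F a).QuadSubform (pfisterMatrix F (Fin.snoc a b)) :=
  ⟨fun v => snocGlue v 0, fun v h => (snocGlue_eq_zero.mp h).1, fun v => by
    simp [pfisterMatrix_snoc_quad]⟩

theorem Matrix.QuadSubform.pfisterMatrix_snoc {k : ℕ} {a : Fin n → F} {b : Fin k → F}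
    (h : (pfisterMatrix F a).QuadSubform (pfisterMatrix F b)) (y : F) :
    (pfisterMatrix F (Fin.snoc a y)).QuadSubform (pfisterMatrix F (Fin.snoc b y)) := by
  obtain ⟨T, hT, hq⟩ := h
  refine ⟨fun v => snocGlue (T fun e => v (Fin.snoc e false)) (T fun e => v (Fin.snoc e true)),
    fun v hv => ?_, fun v => by simp [pfisterMatrix_snoc_quad, hq]⟩
  obtain ⟨h₀, h₁⟩ := snocGlue_eq_zero.mp hv
  rw [← snocGlue_snoc_self v, snocGlue_eq_zero]
  exact ⟨hT _ h₀, hT _ h₁⟩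

/-- `(x₀ + x₁)² + x x₁² = x₀² + (x + 1) x₁²` in characteristic `2`. -/
theorem quadSubform_pfisterMatrix_snoc_add_one [CharP F 2] (a : Fin n → F) (x : F) :
    (pfisterMatrix F (Fin.snoc a (x + 1))).QuadSubform (pfisterMatrix F (Fin.snoc a x)) := by
  refine ⟨fun v => snocGlue ((fun e => v (Fin.snoc e false)) + fun e => v (Fin.snoc e true))
    (fun e => v (Fin.snoc e true)), fun v hv => ?_, fun v => ?_⟩
  · obtain ⟨h₀, h₁⟩ := snocGlue_eq_zero.mp hv
    rw [h₁, add_zero] at h₀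
    rw [← snocGlue_snoc_self v, snocGlue_eq_zero]
    exact ⟨h₀, h₁⟩
  · simp only [pfisterMatrix_snoc_quad, snocGlue_snoc_false, snocGlue_snoc_true,
      (pfisterMatrix_isSymm a).add_dotProduct_mulVec_add]
    ring

end Pfister

section Linkage

variable {F : Type} [Field F] [CharP F 2] {n : ℕ}

theorem span_pfisterCoeff_snoc_inf_le (b : Fin n → F) (z y : F)
    (h : LinearIndependent (squares F) (pfisterCoeff (Fin.snoc (Fin.snoc b z) y))) :
    span (squares F) (range (pfisterCoeff (Fin.snoc b z))) ⊓
        span (squares F) (range (pfisterCoeff (Fin.snoc b y))) ≤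
      span (squares F) (range (pfisterCoeff b)) := by
  set g := pfisterCoeff (Fin.snoc (Fin.snoc b z) y)
  have hz : range (pfisterCoeff (Fin.snoc b z)) ⊆ g '' {f | f (Fin.last _) = false} := by
    rintro _ ⟨e, rfl⟩
    exact ⟨Fin.snoc e false, by simp, by simp [g]⟩
  have hy : range (pfisterCoeff (Fin.snoc b y)) ⊆
      g '' {f | f (Fin.last _).castSucc = false} := by
    rintro _ ⟨e, rfl⟩
    induction e using Fin.snocCases with
    | snoc R s => exact ⟨Fin.snoc (Fin.snoc R false) s, by simp, by simp [g]⟩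
  have hb : g '' ({f | f (Fin.last _) = false} ∩ {f | f (Fin.last _).castSucc = false}) ⊆
      range (pfisterCoeff b) := by
    rintro _ ⟨f, ⟨hf₁, hf₂⟩, rfl⟩
    refine ⟨Fin.init (Fin.init f), ?_⟩
    rw [← Fin.snoc_init_self f, ← Fin.snoc_init_self (Fin.init f)]
    simp_all [g, Fin.init]
  calc _ ≤ _ := inf_le_inf (span_mono hz) (span_mono hy)
    _ ≤ _ := h.span_image_inf_le _ _
    _ ≤ _ := span_mono hb

theorem span_pfisterCoeff_eq_of_le {a b : Fin n → F}
    (ha : LinearIndependent (squares F) (pfisterCoeff a))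
    (h : span (squares F) (range (pfisterCoeff a)) ≤ span (squares F) (range (pfisterCoeff b))) :
    span (squares F) (range (pfisterCoeff a)) = span (squares F) (range (pfisterCoeff b)) :=
  have : FiniteDimensional (squares F) (span (squares F) (range (pfisterCoeff b))) :=
    .span_of_finite _ (finite_range _)
  eq_of_le_of_finrank_le h ((finrank_range_le_card _).trans (finrank_span_eq_card ha).ge)

/-- The isometry fixes the basis vector `1`, the only vector of quadratic value `1`; pairing
with it reads off the coordinate at `fun _ => false`. -/
theorem Matrix.BilinAnisotropic.apply_false_eq_of_pfisterMatrix_snoc {a : Fin (n + 1) → F}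
    {c : Fin n → F} {w : F} (ha : (pfisterMatrix F a).BilinAnisotropic)
    (hiso : (pfisterMatrix F a).BilinIsometric (pfisterMatrix F (Fin.snoc c w)))
    {v : (Fin (n + 1) → Bool) → F} {t : (Fin n → Bool) → F}
    (hvt : v ⬝ᵥ pfisterMatrix F a *ᵥ v = t ⬝ᵥ pfisterMatrix F c *ᵥ t) :
    v (fun _ => false) = t (fun _ => false) := by
  obtain ⟨P, -, hP⟩ := hiso
  have key := ha.dotProduct_mulVec_eq_of_congr (pfisterMatrix_isSymm a) hP
    (u₁ := Pi.single (fun _ => false) 1) (u₂ := Pi.single (fun _ => false) 1)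
    (v₁ := v) (v₂ := snocGlue t 0) (by simp [pfisterMatrix_eq_diagonal])
    (by simp [hvt, pfisterMatrix_snoc_quad])
  simp only [pfisterMatrix_eq_diagonal, single_one_dotProduct, mulVec_diagonal,
    pfisterCoeff_false, one_mul, snocGlue, Bool.false_eq_true, if_false] at key
  exact key

end Linkage

section Main

variable {F : Type} [Field F] [CharP F 2] {m : ℕ}

theorem pfisterMatrix_snoc_not_linked (a : Fin m → F) (x z y : F)
    (h : (pfisterMatrix F (Fin.snoc (Fin.snoc (Fin.snoc a x) z) y)).BilinAnisotropic) :
    (pfisterMatrix F (Fin.snoc (Fin.snoc a x) z)).BilinAnisotropic ∧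
      (pfisterMatrix F (Fin.snoc (Fin.snoc a (x + 1)) y)).BilinAnisotropic ∧
      ¬∃ (c : Fin (m + 1) → F) (d e : F),
        (pfisterMatrix F (Fin.snoc (Fin.snoc a x) z)).BilinIsometric
          (pfisterMatrix F (Fin.snoc c d)) ∧
        (pfisterMatrix F (Fin.snoc (Fin.snoc a (x + 1)) y)).BilinIsometric
          (pfisterMatrix F (Fin.snoc c e)) := by
  have hψx := (quadSubform_pfisterMatrix_snoc_add_one a x).pfisterMatrix_snoc y
  have hφa := (quadSubform_pfisterMatrix_snoc _ y).bilinAnisotropic h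
  have hψa :=
    (hψx.trans ((quadSubform_pfisterMatrix_snoc _ z).pfisterMatrix_snoc y)).bilinAnisotropic h
  refine ⟨hφa, hψa, fun ⟨c, d, e, hφ, hψ⟩ => ?_⟩
  have hcφ := (quadSubform_pfisterMatrix_snoc c d).trans hφ.quadSubform
  have hcψ := (quadSubform_pfisterMatrix_snoc c e).trans (hψ.quadSubform.trans hψx)
  have hspan := span_pfisterCoeff_eq_of_le (hcφ.bilinAnisotropic hφa).linearIndependent_squares
    ((le_inf hcφ.span_range_le hcψ.span_range_le).trans
      (span_pfisterCoeff_snoc_inf_le _ z y h.linearIndependent_squares))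
  obtain ⟨t, ht⟩ := (mem_span_range_iff_exists_dotProduct_diagonal _ _).mp
    (hspan ▸ add_one_mem_span_pfisterCoeff_snoc a x)
  set ex : Fin (m + 2) → Bool := Fin.snoc (Fin.snoc (fun _ => false) true) false
  have hex : ex ≠ fun _ => false := fun h => by simpa [ex] using congrFun h (Fin.last m).castSucc
  have h₁ := hφa.apply_false_eq_of_pfisterMatrix_snoc hφ (t := t)
    (v := Pi.single (fun _ => false) 1 + Pi.single ex 1) (by
      rw [(pfisterMatrix_isSymm _).add_dotProduct_mulVec_add]
      simpa [pfisterMatrix_eq_diagonal, ex, ht] using add_comm 1 x)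
  have h₀ := hψa.apply_false_eq_of_pfisterMatrix_snoc hψ (t := t)
    (v := Pi.single ex 1) (by simp [pfisterMatrix_eq_diagonal, ex, ht])
  simpa [hex.symm] using h₁.trans h₀.symm

end Main

/-- Let `F` be a field of characteristic `2`, `n = m+2 ≥ 2`, and
`α₁,…,α_{n+1} ∈ F^×` such that the bilinear `(n+1)`-fold Pfister form
`⟨⟨α₁,…,α_{n+1}⟩⟩` is anisotropic. Then the anisotropic bilinear `n`-fold Pfister forms
`φ = ⟨⟨α₁,…,α_{n-1},αₙ⟩⟩` and `ψ = ⟨⟨α₁,…,α_{n-2},α_{n-1}+1,α_{n+1}⟩⟩` do not share a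
common `(n-1)`-fold Pfister factor. -/
theorem bilinPfister_not_linked_of_anisotropic (F : Type) [Field F] [CharP F 2] (m : ℕ)
    (α : Fin (m + 3) → F)
    (haniso : (pfisterMatrix F α).BilinAnisotropic) :
    (pfisterMatrix F (fun i : Fin (m + 2) => α (Fin.castLE (by omega) i))).BilinAnisotropic ∧
    (pfisterMatrix F
        (Fin.snoc (Fin.snoc (fun i : Fin m => α (Fin.castLE (by omega) i))
          (α ⟨m, by omega⟩ + 1)) (α ⟨m + 2, by omega⟩))).BilinAnisotropic ∧
    ¬ ∃ c : Fin (m + 1) → F, (∀ i, c i ≠ 0) ∧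
        ∃ d e : F, d ≠ 0 ∧ e ≠ 0 ∧
          Matrix.BilinIsometric
            (pfisterMatrix F (fun i : Fin (m + 2) => α (Fin.castLE (by omega) i)))
            (pfisterMatrix F (Fin.snoc c d)) ∧
          Matrix.BilinIsometric
            (pfisterMatrix F
              (Fin.snoc (Fin.snoc (fun i : Fin m => α (Fin.castLE (by omega) i))
                (α ⟨m, by omega⟩ + 1)) (α ⟨m + 2, by omega⟩)))
            (pfisterMatrix F (Fin.snoc c e)) := by
  rw [show (fun i : Fin (m + 2) => α (Fin.castLE (by omega) i)) = Fin.init α from rfl,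
    show (fun i : Fin m => α (Fin.castLE (by omega) i)) = Fin.init (Fin.init (Fin.init α)) from rfl,
    show α ⟨m, by omega⟩ = Fin.init (Fin.init α) (Fin.last m) from rfl,
    show α ⟨m + 2, by omega⟩ = α (Fin.last (m + 2)) from rfl]
  obtain ⟨a, x, z, y, rfl⟩ : ∃ a x z y, α = Fin.snoc (Fin.snoc (Fin.snoc a x) z) y :=
    ⟨Fin.init (Fin.init (Fin.init α)), Fin.init (Fin.init α) (Fin.last m),
      Fin.init α (Fin.last (m + 1)), α (Fin.last (m + 2)), by simp only [Fin.snoc_init_self]⟩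
  simp only [Fin.init_snoc, Fin.snoc_last]
  obtain ⟨hφ, hψ, hunlinked⟩ := pfisterMatrix_snoc_not_linked a x z y haniso
  exact ⟨hφ, hψ, fun ⟨c, _, d, e, _, _, hcd, hce⟩ => hunlinked ⟨c, d, e, hcd, hce⟩⟩
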